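/- arXiv:2603.26574 — 8 statements merged into one kernel-verified Lean document; each statement's English description precedes it below -/
import Mathlib

section
/- Let f ∈ k[x₁,…,xₙ] and let δ = Σᵢ Pᵢ ∂/∂xᵢ be a derivation with coefficients Pᵢ ∈ k[x₁,…,xₙ]. Let f^h and δ^h denote homogenizations with respect to a new variable x₀ (where δ^h has each coefficient Pᵢ homogenized to a common degree and coefficient 0 on ∂/∂x₀). Then δ(f) is a polynomial multiple of f if and only if δ^h(f^h) is a polynomial multiple of f^h. -/
/-!
Setting `x₀ = 1` gives a ring map `dehomog` with `dehomog (homog d f) = f`, and a form `H` of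
degree `m` is recovered as `homog m (dehomog H)`, a power of `x₀` times `(dehomog H)^h`.
Now `δ^h(f^h)` is a form whose dehomogenization is `δ(f)`. So `f^h ∣ δ^h(f^h)` dehomogenizes to
`f ∣ δ(f)`; conversely, homogenization is multiplicative over a domain, so `δ(f) = g f` gives
`f^h ∣ g^h f^h = (δ(f))^h ∣ δ^h(f^h)`.
-/

open MvPolynomial

/-- Homogenization of `f ∈ k[x₁,…,xₙ]` to degree `d` in the new variable `x₀`
(variable `0` of `Fin (n+1)`; the old variables embed via `Fin.succ`). -/
noncomputable def homog {k : Type*} [CommRing k] {n : ℕ} (d : ℕ)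
    (f : MvPolynomial (Fin n) k) : MvPolynomial (Fin (n + 1)) k :=
  (AddMonoidAlgebra.coeff f).sum fun m c =>
    MvPolynomial.monomial
      (Finsupp.mapDomain Fin.succ m + Finsupp.single 0 (d - m.sum fun _ e => e)) c

section

variable {k : Type*} [CommRing k] {n : ℕ}

theorem Finsupp.degree_cons {M : Type*} [AddCommMonoid M] (y : M) (s : Fin n →₀ M) :
    (Finsupp.cons y s).degree = y + s.degree := by
  simp [Finsupp.degree_eq_sum, Fin.sum_univ_succ]

theorem Finsupp.mapDomain_succ_add_single_zero_eq_cons (d : ℕ) (m : Fin n →₀ ℕ) :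
    Finsupp.mapDomain Fin.succ m + Finsupp.single 0 (d - m.sum fun _ e => e) =
      Finsupp.cons (d - m.degree) m := by
  ext j
  refine Fin.cases ?_ (fun i => ?_) j
  · simp [Finsupp.degree_apply, Finsupp.mapDomain_of_notMem_range, Finsupp.sum]
  · simp [Finsupp.mapDomain_apply (Fin.succ_injective n)]

theorem Finsupp.degree_eq_add_degree_tail {M : Type*} [AddCommMonoid M] (u : Fin (n + 1) →₀ M) :
    u.degree = u 0 + u.tail.degree := by
  conv_lhs => rw [← Finsupp.cons_tail u]
  exact Finsupp.degree_cons _ _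

theorem homog_eq_sum (d : ℕ) (f : MvPolynomial (Fin n) k) :
    homog d f = ∑ m ∈ f.support, monomial (Finsupp.cons (d - m.degree) m) (coeff m f) := by
  simp only [homog, ← Finsupp.mapDomain_succ_add_single_zero_eq_cons]
  rfl

theorem homog_monomial (d : ℕ) (m : Fin n →₀ ℕ) (c : k) :
    homog d (monomial m c) = monomial (Finsupp.cons (d - m.degree) m) c := by
  classical
  rw [homog_eq_sum, support_monomial]
  split_ifs with h <;> simp [h]

theorem homog_add (d : ℕ) (f g : MvPolynomial (Fin n) k) :
    homog d (f + g) = homog d f + homog d g := by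
  simp only [homog, AddMonoidAlgebra.coeff_add]
  exact Finsupp.sum_add_index' (fun _ => monomial_zero) fun _ => map_add _

theorem homog_zero (d : ℕ) : homog d (0 : MvPolynomial (Fin n) k) = 0 := by
  simp [homog_eq_sum]

theorem homog_sum {ι : Type*} (d : ℕ) (s : Finset ι) (f : ι → MvPolynomial (Fin n) k) :
    homog d (∑ i ∈ s, f i) = ∑ i ∈ s, homog d (f i) :=
  map_sum (AddMonoidHom.mk' (homog d) (homog_add d)) f s

theorem isHomogeneous_homog {d : ℕ} {f : MvPolynomial (Fin n) k} (h : f.totalDegree ≤ d) :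
    (homog d f).IsHomogeneous d := by
  rw [homog_eq_sum]
  refine IsHomogeneous.sum _ _ _ fun m hm => isHomogeneous_monomial _ ?_
  have : m.degree ≤ d := (le_totalDegree hm).trans h
  rw [Finsupp.degree_cons]
  omega

theorem homog_add_eq_X_zero_pow_mul {d : ℕ} {f : MvPolynomial (Fin n) k} (h : f.totalDegree ≤ d)
    (r : ℕ) : homog (d + r) f = X 0 ^ r * homog d f := by
  rw [homog_eq_sum, homog_eq_sum, Finset.mul_sum]
  refine Finset.sum_congr rfl fun m hm => ?_
  have : m.degree ≤ d := (le_totalDegree hm).trans h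
  rw [X_pow_eq_monomial, monomial_mul, one_mul, ← Finsupp.cons_zero_eq_single_zero]
  congr 2
  ext j
  refine Fin.cases ?_ (fun i => ?_) j <;> simp only [Finsupp.add_apply, Finsupp.cons_zero,
    Finsupp.cons_succ, Finsupp.coe_zero, Pi.zero_apply, zero_add]
  omega

noncomputable def dehomog : MvPolynomial (Fin (n + 1)) k →ₐ[k] MvPolynomial (Fin n) k :=
  aeval (Fin.cases 1 X)

theorem dehomog_monomial (u : Fin (n + 1) →₀ ℕ) (c : k) :
    dehomog (monomial u c) = monomial u.tail c := by
  rw [dehomog, aeval_monomial, monomial_eq, Finsupp.prod_fintype _ _ (fun _ => pow_zero _),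
    Finsupp.prod_fintype _ _ (fun _ => pow_zero _), Fin.prod_univ_succ]
  simp [Finsupp.tail_apply]

theorem dehomog_homog (d : ℕ) (f : MvPolynomial (Fin n) k) : dehomog (homog d f) = f := by
  induction f using MvPolynomial.induction_on' with
  | monomial m c => rw [homog_monomial, dehomog_monomial, Finsupp.tail_cons]
  | add p q hp hq => rw [homog_add, map_add, hp, hq]

theorem dehomog_pderiv_succ (i : Fin n) (H : MvPolynomial (Fin (n + 1)) k) :
    dehomog (pderiv i.succ H) = pderiv i (dehomog H) := by
  induction H using MvPolynomial.induction_on' with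
  | monomial u c =>
    have : (u - Finsupp.single i.succ 1).tail = u.tail - Finsupp.single i 1 := by
      ext j; simp [Finsupp.tail_apply, Finsupp.single_apply]
    rw [pderiv_monomial, dehomog_monomial, dehomog_monomial, pderiv_monomial, this,
      Finsupp.tail_apply]
  | add p q hp hq => simp only [map_add, hp, hq]

theorem MvPolynomial.IsHomogeneous.homog_dehomog {m : ℕ} {H : MvPolynomial (Fin (n + 1)) k}
    (hH : H.IsHomogeneous m) : homog m (dehomog H) = H := by
  have hsum := H.support_sum_monomial_coeff
  conv_lhs => rw [← hsum]
  conv_rhs => rw [← hsum]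
  rw [map_sum, homog_sum]
  refine Finset.sum_congr rfl fun u hu => ?_
  have hdeg : m = u.degree := hH.degree_eq_sum_deg_support hu
  rw [dehomog_monomial, homog_monomial]
  congr 2
  conv_rhs => rw [← Finsupp.cons_tail u]
  rw [hdeg, Finsupp.degree_eq_add_degree_tail, Nat.add_sub_cancel]

theorem MvPolynomial.IsHomogeneous.totalDegree_dehomog_le {m : ℕ}
    {H : MvPolynomial (Fin (n + 1)) k} (hH : H.IsHomogeneous m) :
    (dehomog H).totalDegree ≤ m := by
  rw [← H.support_sum_monomial_coeff, map_sum]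
  refine (totalDegree_finsetSum _ _).trans (Finset.sup_le fun u hu => ?_)
  rw [dehomog_monomial]
  refine (totalDegree_monomial_le _ _).trans ?_
  change u.tail.degree ≤ m
  rw [hH.degree_eq_sum_deg_support hu, ← Finsupp.degree_apply,
    Finsupp.degree_eq_add_degree_tail]
  exact Nat.le_add_left _ _

theorem MvPolynomial.IsHomogeneous.homog_totalDegree_dehomog_dvd {m : ℕ}
    {H : MvPolynomial (Fin (n + 1)) k} (hH : H.IsHomogeneous m) :
    homog (dehomog H).totalDegree (dehomog H) ∣ H := by
  refine ⟨X 0 ^ (m - (dehomog H).totalDegree), ?_⟩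
  rw [mul_comm, ← homog_add_eq_X_zero_pow_mul le_rfl,
    Nat.add_sub_cancel' hH.totalDegree_dehomog_le, hH.homog_dehomog]

theorem homog_totalDegree_mul [IsDomain k] (f g : MvPolynomial (Fin n) k) :
    homog (f * g).totalDegree (f * g) = homog f.totalDegree f * homog g.totalDegree g := by
  by_cases hf : f = 0
  · simp [hf, homog_zero]
  by_cases hg : g = 0
  · simp [hg, homog_zero]
  have hfg := (isHomogeneous_homog (le_refl f.totalDegree)).mul
    (isHomogeneous_homog (le_refl g.totalDegree))
  rw [← hfg.homog_dehomog, map_mul, dehomog_homog, dehomog_homog,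
    totalDegree_mul_of_isDomain hf hg]

theorem MvPolynomial.IsHomogeneous.homog_dvd_iff [IsDomain k] {m : ℕ}
    {H : MvPolynomial (Fin (n + 1)) k} (hH : H.IsHomogeneous m) (f : MvPolynomial (Fin n) k) :
    homog f.totalDegree f ∣ H ↔ f ∣ dehomog H := by
  refine ⟨fun h => dehomog_homog f.totalDegree f ▸ map_dvd dehomog h, ?_⟩
  rintro ⟨g, hg⟩
  calc homog f.totalDegree f ∣ homog (f * g).totalDegree (f * g) := by
        rw [homog_totalDegree_mul]; exact dvd_mul_right _ _
    _ ∣ H := hg ▸ hH.homog_totalDegree_dehomog_dvd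

end

theorem stmt_1_general {k : Type*} [Field k] {n : ℕ}
    (f : MvPolynomial (Fin n) k) (P : Fin n → MvPolynomial (Fin n) k) :
    (∑ i, P i * pderiv i f) ∈ Ideal.span {f} ↔
      (∑ i : Fin n,
          homog (Finset.univ.sup fun j => (P j).totalDegree) (P i) *
            pderiv i.succ (homog f.totalDegree f))
        ∈ Ideal.span {homog f.totalDegree f} := by
  have hP : ∀ i, (P i).totalDegree ≤ Finset.univ.sup fun j => (P j).totalDegree :=
    fun i => Finset.le_sup (f := fun j => (P j).totalDegree) (Finset.mem_univ i)
  have hH : (∑ i : Fin n, homog (Finset.univ.sup fun j => (P j).totalDegree) (P i) *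
      pderiv i.succ (homog f.totalDegree f)).IsHomogeneous _ :=
    IsHomogeneous.sum _ _ _ fun i _ =>
      (isHomogeneous_homog (hP i)).mul (isHomogeneous_homog le_rfl).pderiv
  rw [Ideal.mem_span_singleton, Ideal.mem_span_singleton, hH.homog_dvd_iff]
  simp only [map_sum, map_mul, dehomog_homog, dehomog_pderiv_succ]

/-- For `f ∈ k[x₁,…,xₙ]` and a derivation `δ = Σᵢ Pᵢ ∂ᵢ`,
`δ(f) ∈ (f)` iff `δ^h(f^h) ∈ (f^h)`, where `^h` denotes homogenization in a new
variable `x₀` (the coefficients `Pᵢ` being homogenized to the common degree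
`max deg Pᵢ`, and `δ^h` having coefficient `0` on `∂/∂x₀`). -/
theorem stmt_1 {k : Type*} [Field k] [CharZero k] {n : ℕ}
    (f : MvPolynomial (Fin n) k) (P : Fin n → MvPolynomial (Fin n) k) :
    (∑ i, P i * pderiv i f) ∈ Ideal.span {f} ↔
      (∑ i : Fin n,
          homog (Finset.univ.sup fun j => (P j).totalDegree) (P i) *
            pderiv i.succ (homog f.totalDegree f))
        ∈ Ideal.span {homog f.totalDegree f} :=
  stmt_1_general f P
end

section
/- For any polynomial f of degree ≥ 1 and any integer m ≥ 1, Der(f^m) = Der(f): a derivation δ satisfies δ(f^m) ∈ (f^m) if and only if δ(f) ∈ (f). -/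
open MvPolynomial

/-- For `f` of degree ≥ 1 and `m ≥ 1` (char 0),
`δ(f^m) ∈ (f^m)` iff `δ(f) ∈ (f)`, i.e. `Der(f^m) = Der(f)`. -/
theorem stmt_7 {k : Type*} [Field k] [CharZero k] {n : ℕ}
    (f : MvPolynomial (Fin n) k) (hf : 1 ≤ f.totalDegree)
    (m : ℕ) (hm : 1 ≤ m) (g : Fin n → MvPolynomial (Fin n) k) :
    (∑ i, g i * pderiv i (f ^ m)) ∈ Ideal.span {f ^ m} ↔
      (∑ i, g i * pderiv i f) ∈ Ideal.span {f} := by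
  have hf0 : f ≠ 0 := by
    intro h
    simp [h] at hf
  have hfm : f ^ (m - 1) ≠ 0 := pow_ne_zero _ hf0
  have hu : IsUnit ((m : MvPolynomial (Fin n) k)) := by
    rw [← map_natCast (C : k →+* MvPolynomial (Fin n) k)]
    exact (isUnit_iff_ne_zero.mpr (Nat.cast_ne_zero.mpr
      (by omega : (m:ℕ) ≠ 0)) : IsUnit (m:k)).map (C : k →+* _)
  have hsum : (∑ i, g i * pderiv i (f ^ m)) =
      (m : MvPolynomial (Fin n) k) * (f ^ (m - 1) *
        ∑ i, g i * pderiv i f) := by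
    rw [Finset.mul_sum, Finset.mul_sum]
    refine Finset.sum_congr rfl fun i _ => ?_
    rw [Derivation.leibniz_pow]
    simp [nsmul_eq_mul]
    ring
  rw [Ideal.mem_span_singleton, Ideal.mem_span_singleton, hsum,
    hu.dvd_mul_left]
  have hpow : f ^ m = f ^ (m - 1) * f := by
    rw [← pow_succ]
    congr 1
    omega
  rw [hpow, mul_dvd_mul_iff_left hfm]
end

section
/- Let F = x₁⋯x_ℓ · ∏_{1≤i<j≤ℓ}(xᵢ^{nᵢ} − xⱼ^{nⱼ}) with positive integers n₁,…,n_ℓ, and let ω = (ω₁,…,ω_ℓ) be positive weights with nᵢωᵢ = nⱼωⱼ for all i,j. Then for each m with 0 ≤ m ≤ ℓ−1, the derivation δₘ = Σᵢ ωᵢ xᵢ^{m·nᵢ+1} ∂/∂xᵢ satisfies δₘ(F) ∈ (F). -/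
open MvPolynomial

private noncomputable def Dop {k : Type*} [CommRing k] {ℓ : ℕ} (c : Fin ℓ → MvPolynomial (Fin ℓ) k)
    (p : MvPolynomial (Fin ℓ) k) : MvPolynomial (Fin ℓ) k :=
  ∑ i, c i * pderiv i p

private lemma Dop_mul {k : Type*} [CommRing k] {ℓ : ℕ}
    (c : Fin ℓ → MvPolynomial (Fin ℓ) k) (p q : MvPolynomial (Fin ℓ) k) :
    Dop c (p * q) = q * Dop c p + p * Dop c q := by
  simp only [Dop, pderiv_mul, Finset.mul_sum, ← Finset.sum_add_distrib]
  exact Finset.sum_congr rfl fun i _ => by ring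

private lemma Dop_dvd_mul {k : Type*} [CommRing k] {ℓ : ℕ}
    {c : Fin ℓ → MvPolynomial (Fin ℓ) k} {p q : MvPolynomial (Fin ℓ) k}
    (hp : p ∣ Dop c p) (hq : q ∣ Dop c q) : p * q ∣ Dop c (p * q) := by
  obtain ⟨a, ha⟩ := hp; obtain ⟨b, hb⟩ := hq
  exact ⟨a + b, by rw [Dop_mul, ha, hb]; ring⟩

private lemma Dop_one {k : Type*} [CommRing k] {ℓ : ℕ}
    (c : Fin ℓ → MvPolynomial (Fin ℓ) k) : Dop c 1 = 0 := by
  simp [Dop, pderiv_one]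

private lemma Dop_sub {k : Type*} [CommRing k] {ℓ : ℕ}
    (c : Fin ℓ → MvPolynomial (Fin ℓ) k) (p q : MvPolynomial (Fin ℓ) k) :
    Dop c (p - q) = Dop c p - Dop c q := by
  simp [Dop, mul_sub, Finset.sum_sub_distrib]

private lemma Dop_X {k : Type*} [CommRing k] {ℓ : ℕ}
    (c : Fin ℓ → MvPolynomial (Fin ℓ) k) (i : Fin ℓ) : Dop c (X i) = c i := by
  unfold Dop
  rw [Finset.sum_eq_single i]
  · simp
  · intro b _ hb; simp [pderiv_X_of_ne (Ne.symm hb)]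
  · simp

private lemma Dop_X_pow {k : Type*} [CommRing k] {ℓ : ℕ}
    (c : Fin ℓ → MvPolynomial (Fin ℓ) k) (i : Fin ℓ) (a : ℕ) :
    Dop c (X i ^ a) = c i * ((a : MvPolynomial (Fin ℓ) k) * X i ^ (a - 1)) := by
  unfold Dop
  rw [Finset.sum_eq_single i]
  · simp [pderiv_pow, mul_assoc]
  · intro b _ hb
    simp [pderiv_pow, pderiv_X_of_ne (Ne.symm hb)]
  · simp

/-- Let `F = x₁⋯x_ℓ ∏_{i<j}(xᵢ^{nᵢ} − xⱼ^{nⱼ})` with positive integers `nᵢ`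
and positive weights `ωᵢ` satisfying `nᵢωᵢ = nⱼωⱼ`. Then for each `0 ≤ m ≤ ℓ−1`, the
derivation `δₘ = Σᵢ ωᵢ xᵢ^{m·nᵢ+1} ∂ᵢ` satisfies `δₘ(F) ∈ (F)`. -/
theorem stmt_9 {k : Type*} [Field k] [CharZero k] {ℓ : ℕ}
    (n w : Fin ℓ → ℕ) (hn : ∀ i, 0 < n i) (hw : ∀ i, 0 < w i)
    (hnw : ∀ i j, n i * w i = n j * w j)
    (m : ℕ) (hm : m ≤ ℓ - 1) :
    (∑ i, (w i : MvPolynomial (Fin ℓ) k) * X i ^ (m * n i + 1) *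
        pderiv i ((∏ i, X i) *
          ∏ i, ∏ j ∈ Finset.Ioi i, (X i ^ n i - X j ^ n j)))
      ∈ Ideal.span
          {(∏ i, X i) * ∏ i, ∏ j ∈ Finset.Ioi i, (X i ^ n i - X j ^ n j)} := by
  set c : Fin ℓ → MvPolynomial (Fin ℓ) k :=
    fun i => (w i : MvPolynomial (Fin ℓ) k) * X i ^ (m * n i + 1) with hc
  have key : ∀ p : MvPolynomial (Fin ℓ) k,
      (∑ i, c i * pderiv i p) = Dop c p := fun p => rfl
  rw [show (∑ i, (w i : MvPolynomial (Fin ℓ) k) * X i ^ (m * n i + 1) *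
        pderiv i ((∏ i, X i) *
          ∏ i, ∏ j ∈ Finset.Ioi i, (X i ^ n i - X j ^ n j)))
      = Dop c ((∏ i, X i) * ∏ i, ∏ j ∈ Finset.Ioi i, (X i ^ n i - X j ^ n j)) from
    Finset.sum_congr rfl fun i _ => by rw [mul_assoc]]
  rw [Ideal.mem_span_singleton]
  apply Dop_dvd_mul
  · -- ∏ X i divides its image
    apply Finset.prod_induction _ (fun p => p ∣ Dop c p)
      (fun a b => Dop_dvd_mul) (by rw [Dop_one]; exact dvd_zero 1)
    intro i _
    rw [Dop_X c i, hc]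
    exact Dvd.dvd.mul_left (dvd_pow_self (X i) (Nat.succ_ne_zero _)) _
  · apply Finset.prod_induction _ (fun p => p ∣ Dop c p)
      (fun a b => Dop_dvd_mul) (by rw [Dop_one]; exact dvd_zero 1)
    intro i _
    apply Finset.prod_induction _ (fun p => p ∣ Dop c p)
      (fun a b => Dop_dvd_mul) (by rw [Dop_one]; exact dvd_zero 1)
    intro j hj
    have hij : i ≠ j := (Finset.mem_Ioi.mp hj).ne
    rw [Dop_sub, Dop_X_pow, Dop_X_pow, hc]
    have hexp : ∀ t : Fin ℓ, (m * n t + 1) + (n t - 1) = n t * (m + 1) := by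
      intro t
      rcases Nat.exists_eq_succ_of_ne_zero (hn t).ne' with ⟨s, hs⟩
      rw [hs]; simp [Nat.mul_succ, Nat.succ_mul]; ring
    have hterm : ∀ t : Fin ℓ,
        (w t : MvPolynomial (Fin ℓ) k) * X t ^ (m * n t + 1) *
          ((n t : MvPolynomial (Fin ℓ) k) * X t ^ (n t - 1))
        = ((n t * w t : ℕ) : MvPolynomial (Fin ℓ) k) * (X t ^ n t) ^ (m + 1) := by
      intro t
      rw [← pow_mul, ← hexp t, pow_add]
      push_cast
      ring
    rw [hterm i, hterm j, hnw i j]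
    rw [← mul_sub]
    exact Dvd.dvd.mul_left (sub_dvd_pow_sub_pow _ _ _) _
end

section
/- Let F_k = p · ∏_{1≤i<j≤ℓ}(xᵢ^{nᵢ} − xⱼ^{nⱼ}) where p = 1 if k = 0 and p = x₁⋯x_k if 1 ≤ k ≤ ℓ, and let ω be positive weights with nᵢωᵢ = nⱼωⱼ for all i,j. Then the derivation μ = Σᵢ p·ωᵢ · x₁^{n₁−1}⋯(xᵢ^{nᵢ−1} omitted)⋯x_ℓ^{n_ℓ−1} ∂/∂xᵢ satisfies μ(F_k) ∈ (F_k). -/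
open MvPolynomial Finset

lemma aux_sum_eq_mkDerivation {k : Type*} [Field k] {ℓ : ℕ}
    (c : Fin ℓ → MvPolynomial (Fin ℓ) k)
    (g : MvPolynomial (Fin ℓ) k) :
    ∑ i, c i * pderiv i g = mkDerivation k c g := by
  induction g using MvPolynomial.induction_on with
  | C a => simp
  | add p q hp hq => simp [mul_add, Finset.sum_add_distrib, hp, hq]
  | mul_X p i hp =>
      simp only [pderiv_mul, pderiv_X, Derivation.leibniz, mkDerivation_X,
        smul_eq_mul, Pi.single_apply, mul_add, Finset.sum_add_distrib, mul_ite,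
        mul_one, mul_zero, Finset.sum_ite_eq, Finset.sum_ite_eq',
        Finset.mem_univ, if_true, ← hp, Finset.mul_sum]
      rw [show (∑ j, c j * (X i * pderiv j p)) = X i * ∑ j, c j * pderiv j p from by
        rw [Finset.mul_sum]; exact Finset.sum_congr rfl fun j _ => by ring]
      rw [← Finset.mul_sum]
      ring

lemma aux_deriv_prod_zero {R A : Type*} [CommRing R] [CommRing A] [Algebra R A]
    {ι : Type*} [DecidableEq ι] (D : Derivation R A A) (s : Finset ι) (f : ι → A)
    (h : ∀ i ∈ s, D (f i) = 0) : D (∏ i ∈ s, f i) = 0 := by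
  induction s using Finset.induction with
  | empty => simp
  | @insert a s ha ih =>
      rw [Finset.prod_insert ha, Derivation.leibniz,
        h a (Finset.mem_insert_self a s), ih fun i hi => h i (Finset.mem_insert_of_mem hi)]
      simp

/-- Let `F_K = p · ∏_{i<j}(xᵢ^{nᵢ} − xⱼ^{nⱼ})` where `p = x₁⋯x_K`
(`p = 1` for `K = 0`), and let `ω` be positive weights with `nᵢωᵢ = nⱼωⱼ`. Then the
derivation `μ = Σᵢ p·ωᵢ·(x₁^{n₁−1}⋯x̂ᵢ⋯x_ℓ^{n_ℓ−1}) ∂ᵢ` satisfies `μ(F_K) ∈ (F_K)`. -/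
theorem stmt_11 {k : Type*} [Field k] [CharZero k] {ℓ : ℕ}
    (n w : Fin ℓ → ℕ) (hn : ∀ i, 0 < n i) (hw : ∀ i, 0 < w i)
    (hnw : ∀ i j, n i * w i = n j * w j)
    (K : ℕ) (hK : K ≤ ℓ) :
    (∑ i, (∏ t ∈ Finset.univ.filter fun t : Fin ℓ => (t : ℕ) < K, X t) *
          (w i : MvPolynomial (Fin ℓ) k) *
          (∏ j ∈ Finset.univ.erase i, X j ^ (n j - 1)) *
        pderiv i
          ((∏ t ∈ Finset.univ.filter fun t : Fin ℓ => (t : ℕ) < K, X t) *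
            ∏ i, ∏ j ∈ Finset.Ioi i, (X i ^ n i - X j ^ n j)))
      ∈ Ideal.span
          {(∏ t ∈ Finset.univ.filter fun t : Fin ℓ => (t : ℕ) < K, X t) *
            ∏ i, ∏ j ∈ Finset.Ioi i, (X i ^ n i - X j ^ n j)} := by
  set P : MvPolynomial (Fin ℓ) k :=
    ∏ t ∈ Finset.univ.filter fun t : Fin ℓ => (t : ℕ) < K, X t with hP
  set V : MvPolynomial (Fin ℓ) k :=
    ∏ i, ∏ j ∈ Finset.Ioi i, (X i ^ n i - X j ^ n j) with hV
  set c : Fin ℓ → MvPolynomial (Fin ℓ) k :=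
    fun i => P * (w i : MvPolynomial (Fin ℓ) k) *
      ∏ j ∈ Finset.univ.erase i, X j ^ (n j - 1) with hc
  set D := mkDerivation k c with hD
  rw [show (∑ i, c i * pderiv i (P * V)) = D (P * V) from aux_sum_eq_mkDerivation c _]
  -- key computation: D (X i ^ n i) is independent of i
  have key : ∀ i, D (X i ^ n i) =
      ((n i * w i : ℕ) : MvPolynomial (Fin ℓ) k) * (P * ∏ t, X t ^ (n t - 1)) := by
    intro i
    rw [hD, Derivation.leibniz_pow, mkDerivation_X, hc]
    simp only [smul_eq_mul, nsmul_eq_mul]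
    rw [← Finset.mul_prod_erase Finset.univ (fun t => X t ^ (n t - 1)) (Finset.mem_univ i)]
    push_cast
    ring
  have hDV : D V = 0 := by
    refine aux_deriv_prod_zero D _ _ fun i _ => ?_
    refine aux_deriv_prod_zero D _ _ fun j _ => ?_
    rw [map_sub, key i, key j, hnw i j, sub_self]
  have hPdvd : ∀ s : Finset (Fin ℓ), P ∣ D (∏ t ∈ s, X t) := by
    intro s
    induction s using Finset.induction with
    | empty => simp
    | @insert a s ha ih =>
        rw [Finset.prod_insert ha, Derivation.leibniz]
        refine dvd_add ?_ ?_
        · simpa only [smul_eq_mul] using Dvd.dvd.mul_left ih (X a)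
        · rw [hD, mkDerivation_X, smul_eq_mul, hc]
          exact Dvd.dvd.mul_left (Dvd.dvd.mul_right (Dvd.dvd.mul_right dvd_rfl _) _) _
  obtain ⟨q, hq⟩ := hPdvd (Finset.univ.filter fun t : Fin ℓ => (t : ℕ) < K)
  rw [← hP] at hq
  rw [Derivation.leibniz, hDV, smul_zero, zero_add, smul_eq_mul, hq]
  exact Ideal.mem_span_singleton.2 ⟨q, by ring⟩
end

section
/- Let B₁ be the (m+1)×(m+1) matrix whose first row is (x₀, x₁, …, x_m) and whose (j+1)-th row (1 ≤ j ≤ m) has x₀^{r₀+1} in column 0, −xⱼ^{rⱼ+1} in column j, and zeros elsewhere. Then det B₁ = (−1)^m · x₀⋯x_m · Σ_{i=0}^m x₀^{r₀}⋯(xᵢ^{rᵢ} omitted)⋯x_m^{r_m}. -/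
open MvPolynomial


lemma aux_erase {M : Type*} [CommMonoid M] {α : Type*} [Fintype α] [DecidableEq α]
    (f : α → M) (s : α) :
    ∏ t ∈ Finset.univ.erase s, f t = ∏ t, if t = s then 1 else f t := by
  rw [← Finset.prod_erase (f := fun t => if t = s then 1 else f t) Finset.univ (if_pos rfl)]
  exact Finset.prod_congr rfl fun t ht => (if_neg (Finset.ne_of_mem_erase ht)).symm

lemma detL {R : Type*} [CommRing R] {m : ℕ} (v d : Fin (m + 1) → R) :
    (Matrix.of fun a i : Fin (m + 1) =>
        if a = 0 then v i else if (i : ℕ) + 1 = (a : ℕ) then d a else 0).det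
      = (-1) ^ m * v (Fin.last m) * ∏ i : Fin m, d i.succ := by
  rw [Matrix.det_succ_column _ (Fin.last m)]
  have h0 : ∀ b ∈ Finset.univ, b ≠ (0 : Fin (m + 1)) →
      (-1 : R) ^ ((b : ℕ) + ((Fin.last m : Fin (m + 1)) : ℕ)) *
        Matrix.of (fun a i : Fin (m + 1) =>
          if a = 0 then v i else if (i : ℕ) + 1 = (a : ℕ) then d a else 0) b (Fin.last m) *
        ((Matrix.of fun a i : Fin (m + 1) =>
          if a = 0 then v i else if (i : ℕ) + 1 = (a : ℕ) then d a else 0).submatrix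
            b.succAbove (Fin.last m).succAbove).det = 0 := by
    intro b _ hb
    have hb2 : (b : ℕ) < m + 1 := b.isLt
    have : Matrix.of (fun a i : Fin (m + 1) =>
        if a = 0 then v i else if (i : ℕ) + 1 = (a : ℕ) then d a else 0) b (Fin.last m) = 0 := by
      simp only [Matrix.of_apply, if_neg hb, Fin.val_last]
      rw [if_neg (by omega)]
    rw [this, mul_zero, zero_mul]
  rw [Finset.sum_eq_single_of_mem 0 (Finset.mem_univ 0) h0]
  have hmin : (Matrix.of fun a i : Fin (m + 1) =>
      if a = 0 then v i else if (i : ℕ) + 1 = (a : ℕ) then d a else 0).submatrix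
      (Fin.succAbove 0) (Fin.last m).succAbove
      = Matrix.diagonal (fun a : Fin m => d a.succ) := by
    ext a i
    simp only [Matrix.submatrix_apply, Fin.succAbove_zero, Fin.succAbove_last,
      Matrix.of_apply, Matrix.diagonal, Matrix.of_apply]
    rw [if_neg (Fin.succ_ne_zero a)]
    simp only [Fin.coe_castSucc, Fin.val_succ]
    by_cases h : a = i
    · subst h; simp
    · rw [if_neg (fun hh => h (Fin.ext (by omega))), if_neg h]
  rw [hmin, Matrix.det_diagonal]
  simp

lemma detB {R : Type*} [CommRing R] :
    ∀ (m : ℕ) (x : Fin (m + 1) → R) (r : Fin (m + 1) → ℕ),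
    (Matrix.of fun a i : Fin (m + 1) =>
        if a = 0 then x i
        else if i = 0 then x 0 ^ (r 0 + 1)
        else if i = a then -x a ^ (r a + 1)
        else 0).det
      = (-1) ^ m * (∏ i, x i) *
          ∑ i : Fin (m + 1), ∏ t ∈ Finset.univ.erase i, x t ^ r t
  | 0, x, r => by
      simp [Matrix.det_fin_one]
  | (m + 1), x, r => by
      have IH := detB m (fun i => x i.castSucc) (fun i => r i.castSucc)
      set f : Fin (m + 2) → Fin (m + 2) → R := fun a i =>
        if a = 0 then x i
        else if i = 0 then x 0 ^ (r 0 + 1)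
        else if i = a then -x a ^ (r a + 1)
        else 0 with hf
      have hL0 : (Fin.last (m + 1)) ≠ (0 : Fin (m + 2)) := by
        simp [Fin.ext_iff]
      rw [Matrix.det_succ_row _ (Fin.last (m + 1))]
      rw [← Finset.sum_subset (Finset.subset_univ ({0, Fin.last (m + 1)} : Finset (Fin (m + 2))))
        (by
          intro j _ hj
          simp only [Finset.mem_insert, Finset.mem_singleton, not_or] at hj
          have : Matrix.of f (Fin.last (m + 1)) j = 0 := by
            simp only [Matrix.of_apply, hf, if_neg hL0, if_neg hj.1, if_neg hj.2]
          rw [this, mul_zero, zero_mul]),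
        Finset.sum_pair (Ne.symm hL0)]
      have h_entry0 : Matrix.of f (Fin.last (m + 1)) 0 = x 0 ^ (r 0 + 1) := by
        simp only [Matrix.of_apply, hf, if_neg hL0, if_pos rfl, if_true]
      have h_entryL : Matrix.of f (Fin.last (m + 1)) (Fin.last (m + 1))
          = -x (Fin.last (m + 1)) ^ (r (Fin.last (m + 1)) + 1) := by
        simp only [Matrix.of_apply, hf, if_neg hL0, if_pos rfl, if_true]
      have h_min0 : (Matrix.of f).submatrix (Fin.last (m + 1)).succAbove (Fin.succAbove 0)
          = Matrix.of (fun a i : Fin (m + 1) =>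
              if a = 0 then x i.succ
              else if (i : ℕ) + 1 = (a : ℕ) then -x a.castSucc ^ (r a.castSucc + 1)
              else 0) := by
        ext a i
        simp only [Matrix.submatrix_apply, Fin.succAbove_last, Fin.succAbove_zero,
          Matrix.of_apply, hf]
        by_cases ha : a = 0
        · subst ha; simp
        · have h1 : a.castSucc ≠ (0 : Fin (m + 2)) := by
            simp [Fin.castSucc_eq_zero_iff, ha]
          rw [if_neg h1, if_neg (Fin.succ_ne_zero i), if_neg ha]
          by_cases h : (i : ℕ) + 1 = (a : ℕ)
          · rw [if_pos (Fin.ext (by simp [h])), if_pos h]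
          · rw [if_neg (fun hh => h (by simpa [Fin.ext_iff] using hh)), if_neg h]
      have h_minL : (Matrix.of f).submatrix (Fin.last (m + 1)).succAbove
            (Fin.last (m + 1)).succAbove
          = Matrix.of (fun a i : Fin (m + 1) =>
              if a = 0 then x i.castSucc
              else if i = 0 then x (Fin.castSucc 0) ^ (r (Fin.castSucc 0) + 1)
              else if i = a then -x a.castSucc ^ (r a.castSucc + 1)
              else 0) := by
        ext a i
        simp only [Matrix.submatrix_apply, Fin.succAbove_last, Matrix.of_apply, hf,
          Fin.castSucc_eq_zero_iff, Fin.castSucc_inj, Fin.castSucc_zero]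
      rw [h_entry0, h_entryL, h_min0, h_minL, detL, IH]
      have heven : ((-1 : R) ^ m) * (-1) ^ m = 1 := by
        rw [← pow_add]; exact Even.neg_one_pow ⟨m, rfl⟩
      have hsL : (-1 : R) ^ ((↑(Fin.last (m + 1)) : ℕ) + (↑(Fin.last (m + 1)) : ℕ)) = 1 :=
        Even.neg_one_pow ⟨m + 1, rfl⟩
      have hcl : ∀ i : Fin (m + 1), Fin.last (m + 1) ≠ i.castSucc :=
        fun i => (Fin.castSucc_lt_last i).ne'
      have hsum : (∑ i : Fin (m + 1 + 1), ∏ t ∈ Finset.univ.erase i, x t ^ r t)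
          = x (Fin.last (m + 1)) ^ r (Fin.last (m + 1)) *
              (∑ i : Fin (m + 1), ∏ t ∈ Finset.univ.erase i, x t.castSucc ^ r t.castSucc)
            + ∏ t : Fin (m + 1), x t.castSucc ^ r t.castSucc := by
        rw [Fin.sum_univ_castSucc]
        congr 1
        · rw [Finset.mul_sum]
          refine Finset.sum_congr rfl fun i _ => ?_
          rw [aux_erase, aux_erase, Fin.prod_univ_castSucc, if_neg (hcl i), mul_comm]
          congr 1
          refine Finset.prod_congr rfl fun t _ => ?_
          simp [Fin.castSucc_inj]
        · rw [aux_erase, Fin.prod_univ_castSucc, if_pos rfl, mul_one]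
          refine Finset.prod_congr rfl fun t _ => ?_
          simp [(Fin.castSucc_lt_last t).ne]
      have hprodneg : ∏ i : Fin m, -x i.succ.castSucc ^ (r i.succ.castSucc + 1)
          = (-1) ^ m * ((∏ i : Fin m, x i.succ.castSucc ^ r i.succ.castSucc) *
              ∏ i : Fin m, x i.succ.castSucc) := by
        have hne : ∀ i : Fin m, -x i.succ.castSucc ^ (r i.succ.castSucc + 1)
            = (-1) * (x i.succ.castSucc ^ r i.succ.castSucc * x i.succ.castSucc) := fun i => by
          rw [pow_succ]; ring
        rw [Finset.prod_congr rfl fun i _ => hne i, Finset.prod_mul_distrib,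
          Finset.prod_mul_distrib, Finset.prod_const]
        simp [mul_assoc]
      have hpx : ∏ i : Fin (m + 1 + 1), x i
          = (x 0 * ∏ i : Fin m, x i.succ.castSucc) * x (Fin.last (m + 1)) := by
        rw [Fin.prod_univ_castSucc, Fin.prod_univ_succ, Fin.castSucc_zero]
      have hpP : ∏ i : Fin (m + 1), x i.castSucc
          = x 0 * ∏ i : Fin m, x i.succ.castSucc := by
        rw [Fin.prod_univ_succ, Fin.castSucc_zero]
      have hpQ : ∏ t : Fin (m + 1), x t.castSucc ^ r t.castSucc
          = x 0 ^ r 0 * ∏ i : Fin m, x i.succ.castSucc ^ r i.succ.castSucc := by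
        rw [Fin.prod_univ_succ, Fin.castSucc_zero]
      rw [hsL, hsum, hpx, hpP, hpQ, hprodneg, Fin.succ_last]
      simp only [Fin.val_last, Fin.val_zero, Nat.add_zero, Fin.castSucc_zero]
      rw [pow_succ (x 0) (r 0), pow_succ (x (Fin.last (m + 1))) (r (Fin.last (m + 1)))]
      linear_combination (-(x 0 ^ r 0 * x 0 * x (Fin.last (m + 1)) *
        (∏ i : Fin m, x i.succ.castSucc ^ r i.succ.castSucc) *
        (∏ i : Fin m, x i.succ.castSucc) * (-1 : R) ^ m)) * heven

/-- Let `B₁` be the `(m+1)×(m+1)` matrix whose first row is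
`(x₀, x₁, …, x_m)` and whose row `j` (for `1 ≤ j ≤ m`) has `x₀^{r₀+1}` in column `0`,
`−xⱼ^{rⱼ+1}` in column `j`, and zeros elsewhere. Then
`det B₁ = (−1)^m · x₀⋯x_m · Σᵢ ∏_{t≠i} x_t^{r_t}`. -/
theorem stmt_16 {k : Type*} [Field k] {m : ℕ}
    (r : Fin (m + 1) → ℕ) (hr : ∀ i, 0 < r i) :
    (Matrix.of fun a i : Fin (m + 1) =>
        if a = 0 then (X i : MvPolynomial (Fin (m + 1)) k)
        else if i = 0 then X 0 ^ (r 0 + 1)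
        else if i = a then -X a ^ (r a + 1)
        else 0).det
      = (-1) ^ m * (∏ i, X i) *
          ∑ i : Fin (m + 1), ∏ t ∈ Finset.univ.erase i, X t ^ r t := by
  exact detB m (fun i => (X i : MvPolynomial (Fin (m + 1)) k)) r
end

section
/- Let f ∈ k[x₁,…,xₙ] be reduced. Suppose Der(f) ⊆ Der_k(k[x₁,…,xₙ]) is a free module with a basis δ₁,…,δₙ of homogeneous derivations (each δᵢ = Σⱼ Pⱼⁱ∂/∂xⱼ with all Pⱼⁱ homogeneous of degree deg δᵢ) such that Σᵢ deg(δᵢ) = deg(f). Then the divisor in ℙⁿ defined by x₀·f^h (homogenization in x₀) is free: Der(x₀f^h) ⊆ Der_k(k[x₀,…,xₙ]) is a free module of rank n+1 with basis the Euler derivation together with δ₁^h,…,δₙ^h, and the determinant of the corresponding (n+1)×(n+1) Saito matrix equals x₀·f^h up to a unit. -/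
/-!
Since `Der(f)` has a homogeneous basis `δᵢ`, the determinant of its Saito matrix `P` is
homogeneous of degree `Σ dᵢ = deg f`. It is nonzero because the basis is unique, and divisible
by `f`: Cramer's rule puts `det P · ∂ⱼf` in `(f)`, and for reduced `f` the condition
`f ∣ g ∂ⱼf` for all `j` forces `f ∣ g` (a prime `p ∣ f` not dividing `g` would divide all
`∂ⱼp`). Hence `det P = u f` with `u ∈ kˣ`; in particular `f` and the `δᵢ` are homogeneous, so
homogenization does not involve `x₀` at all. Expanding along the `∂₀` column, the cone Saito
matrix has determinant `x₀ · u f`, its rows lie in `Der(x₀ f)` (Euler's identity for the first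
row), and `x₀ f` is reduced, so Saito's criterion applies.
-/

open MvPolynomial

/-- The rows of the Saito matrix for the cone construction: the first row is the Euler
derivation `Σ xⱼ∂ⱼ` of `k[x₀,…,xₙ]`, and row `i + 1` is the homogenization `δᵢ^h` of the
derivation `δᵢ = Σⱼ P i j ∂ⱼ` (zero coefficient on `∂₀`, each `P i j` homogenized to
degree `d i`). -/
noncomputable def saitoRows {k : Type*} [CommRing k] {n : ℕ} (d : Fin n → ℕ)
    (P : Fin n → Fin n → MvPolynomial (Fin n) k) :
    Fin (n + 1) → Fin (n + 1) → MvPolynomial (Fin (n + 1)) k :=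
  Fin.cons (fun j => MvPolynomial.X j)
    (fun i => Fin.cons 0 fun j => homog (d i) (P i j))

theorem Squarefree.dvd_of_forall_prime_dvd {α : Type*} [CommMonoidWithZero α]
    [Nontrivial α] [UniqueFactorizationMonoid α] {f g : α} (hf : Squarefree f)
    (h : ∀ p, Prime p → p ∣ f → p ∣ g) : f ∣ g := by
  induction f using UniqueFactorizationMonoid.induction_on_prime with
  | h₁ => exact absurd hf not_squarefree_zero
  | h₂ x hx => exact hx.dvd
  | h₃ a p _ hp ih =>
    obtain ⟨t, rfl⟩ := ih hf.of_mul_right fun q hq hqa => h q hq (hqa.mul_left p)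
    have hpa : ¬ p ∣ a := fun hpa => hp.not_isUnit (hf p (mul_dvd_mul_left p hpa))
    obtain ⟨s, rfl⟩ := (hp.dvd_mul.mp (h p hp (dvd_mul_right p a))).resolve_left hpa
    exact ⟨s, by ac_rfl⟩

open scoped Matrix

namespace MvPolynomial

section Derivatives

variable {σ R : Type*}

theorem totalDegree_pderiv_lt [CommSemiring R] {i : σ} {p : MvPolynomial σ R}
    (h : pderiv i p ≠ 0) : (pderiv i p).totalDegree < p.totalDegree := by
  obtain ⟨m, hm, hdeg⟩ := Finset.exists_mem_eq_sup (pderiv i p).support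
    (support_nonempty.mpr h) fun s => s.degree
  have hcoeff : coeff (m + Finsupp.single i 1) p ≠ 0 := by
    intro h0
    exact mem_support_iff.mp hm (by rw [coeff_pderiv, h0, zero_mul])
  have hle : Finsupp.degree (m + Finsupp.single i 1) ≤ p.totalDegree :=
    le_totalDegree (mem_support_iff.mpr hcoeff)
  rw [map_add, Finsupp.degree_single] at hle
  change (pderiv i p).support.sup (fun s => s.degree) < _
  omega

theorem pderiv_eq_zero_of_dvd [CommRing R] [IsDomain R] {i : σ} {p : MvPolynomial σ R}
    (h : p ∣ pderiv i p) : pderiv i p = 0 := by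
  by_contra hne
  exact (totalDegree_le_of_dvd_of_isDomain h hne).not_gt (totalDegree_pderiv_lt hne)

theorem eq_C_of_forall_pderiv_eq_zero [CommSemiring R] [NoZeroDivisors R] [CharZero R]
    {p : MvPolynomial σ R} (h : ∀ i, pderiv i p = 0) : p = C (coeff 0 p) := by
  classical
  ext m
  rw [coeff_C]
  split_ifs with hm
  · rw [hm]
  obtain ⟨i, hi⟩ : ∃ i, m i ≠ 0 := by
    by_contra! hzero
    exact hm (Finsupp.ext hzero).symm
  have hsplit : m - Finsupp.single i 1 + Finsupp.single i 1 = m :=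
    tsub_add_cancel_of_le (Finsupp.single_le_iff.mpr (Nat.one_le_iff_ne_zero.mpr hi))
  have hcoeff := coeff_pderiv (i := i) p (m - Finsupp.single i 1)
  rw [h i, coeff_zero, hsplit] at hcoeff
  exact (mul_eq_zero.mp hcoeff.symm).resolve_right (Nat.cast_add_one_ne_zero _)

theorem exists_pderiv_ne_zero_of_prime [Field R] [CharZero R]
    {p : MvPolynomial σ R} (hp : Prime p) : ∃ i, pderiv i p ≠ 0 := by
  by_contra! h
  have hC := eq_C_of_forall_pderiv_eq_zero h
  have hc : coeff 0 p ≠ 0 := fun h0 => hp.ne_zero (by rw [hC, h0, C_0])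
  exact hp.not_isUnit (hC ▸ (isUnit_iff_ne_zero.mpr hc).map C)

theorem Prime.dvd_of_forall_dvd_mul_pderiv [Field R] [CharZero R] {p f g : MvPolynomial σ R}
    (hp : Prime p) (hf : Squarefree f) (hpf : p ∣ f) (h : ∀ i, f ∣ g * pderiv i f) :
    p ∣ g := by
  by_contra hpg
  obtain ⟨i, hi⟩ := exists_pderiv_ne_zero_of_prime hp
  refine hi (pderiv_eq_zero_of_dvd ?_)
  have hpi : p ∣ pderiv i f := (hp.dvd_mul.mp (hpf.trans (h i))).resolve_left hpg
  obtain ⟨t, rfl⟩ := hpf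
  have hpt : ¬ p ∣ t := fun hpt => hp.not_isUnit (hf p (mul_dvd_mul_left p hpt))
  rw [pderiv_mul, dvd_add_left (dvd_mul_right p _)] at hpi
  exact (hp.dvd_mul.mp hpi).resolve_right hpt

theorem Squarefree.dvd_of_forall_dvd_mul_pderiv [Field R] [CharZero R]
    {f g : MvPolynomial σ R} (hf : Squarefree f) (h : ∀ i, f ∣ g * pderiv i f) : f ∣ g :=
  hf.dvd_of_forall_prime_dvd fun _ hp hpf => Prime.dvd_of_forall_dvd_mul_pderiv hp hf hpf h

end Derivatives

section LogDerivations

variable {σ : Type*} [Fintype σ]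

/-- The derivation `Σⱼ θ j ∂ⱼ`, given by its coefficient vector, lies in `Der(F)`. -/
def IsLogDerivation {R : Type*} [CommSemiring R] (F : MvPolynomial σ R)
    (θ : σ → MvPolynomial σ R) : Prop :=
  ∑ j, θ j * pderiv j F ∈ Ideal.span {F}

variable [DecidableEq σ] {k : Type*} [Field k] [CharZero k] {F : MvPolynomial σ k}

theorem Squarefree.dvd_det_of_isLogDerivation (hF : Squarefree F)
    {M : Matrix σ σ (MvPolynomial σ k)} (hM : ∀ i, IsLogDerivation F (M i)) : F ∣ M.det := by
  refine hF.dvd_of_forall_dvd_mul_pderiv fun j => ?_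
  -- `det M • ∇F = adj M *ᵥ (M *ᵥ ∇F)`, and every entry of `M *ᵥ ∇F` lies in `(F)`
  have hcramer : M.det • (fun l => pderiv l F) = M.adjugate *ᵥ (M *ᵥ fun l => pderiv l F) := by
    rw [Matrix.mulVec_mulVec, Matrix.adjugate_mul, Matrix.smul_mulVec, Matrix.one_mulVec]
  have hj := congrFun hcramer j
  rw [Pi.smul_apply, smul_eq_mul] at hj
  rw [hj]
  exact Finset.dvd_sum fun i _ => (Ideal.mem_span_singleton.mp (hM i)).mul_left _

theorem saito_criterion (hF : Squarefree F) {M : Matrix σ σ (MvPolynomial σ k)}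
    (hM : ∀ i, IsLogDerivation F (M i)) {u : k} (hu : u ≠ 0) (hdet : M.det = C u * F)
    {θ : σ → MvPolynomial σ k} (hθ : IsLogDerivation F θ) :
    ∃! c : σ → MvPolynomial σ k, ∀ j, θ j = ∑ i, c i * M i j := by
  have hcomb : ∀ c : σ → MvPolynomial σ k, (∀ j, θ j = ∑ i, c i * M i j) ↔ Mᵀ *ᵥ c = θ := by
    intro c
    rw [Matrix.mulVec_transpose]
    exact ⟨fun h => (_root_.funext h).symm, fun h j => (congrFun h j).symm⟩
  simp only [hcomb]
  have hMdet : Mᵀ.det ≠ 0 := by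
    rw [Matrix.det_transpose, hdet]
    exact mul_ne_zero (C_ne_zero.mpr hu) hF.ne_zero
  refine existsUnique_of_exists_of_unique ?_
    fun _ _ h₁ h₂ => Matrix.mulVec_injective_of_det_ne_zero hMdet (h₁.trans h₂.symm)
  -- Cramer's rule: the `i`-th entry of `cramer Mᵀ θ` is the determinant of `M` with
  -- row `i` replaced by `θ`, whose rows all lie in `Der(F)`.
  have hdvd : ∀ i, F ∣ Mᵀ.cramer θ i := fun i => by
    rw [Matrix.cramer_transpose_apply]
    refine hF.dvd_det_of_isLogDerivation fun l => ?_
    rcases eq_or_ne l i with rfl | hl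
    · simpa using hθ
    · simpa [hl] using hM l
  choose q hq using hdvd
  refine ⟨(C u⁻¹ : MvPolynomial σ k) • q, ?_⟩
  have hcramer : Mᵀ.cramer θ = F • q := _root_.funext hq
  have hFq : F • (Mᵀ *ᵥ q) = F • ((C u : MvPolynomial σ k) • θ) := by
    rw [← Matrix.mulVec_smul, ← hcramer, Matrix.mulVec_cramer, Matrix.det_transpose, hdet,
      mul_comm, mul_smul]
  rw [Matrix.mulVec_smul, smul_right_injective _ hF.ne_zero hFq, smul_smul, ← C_mul,
    inv_mul_cancel₀ hu, C_1, one_smul]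

end LogDerivations

section Homogeneous

variable {σ ι R : Type*} [CommRing R]

theorem isHomogeneous_det [Fintype ι] [DecidableEq ι] {M : Matrix ι ι (MvPolynomial σ R)}
    {d : ι → ℕ} (hM : ∀ i j, (M i j).IsHomogeneous (d i)) : M.det.IsHomogeneous (∑ i, d i) := by
  rw [Matrix.det_apply]
  refine IsHomogeneous.sum _ _ _ fun τ _ => ?_
  rw [Units.smul_def, ← mem_homogeneousSubmodule]
  refine zsmul_mem ?_ _
  rw [mem_homogeneousSubmodule, ← Equiv.sum_comp τ d]
  exact IsHomogeneous.prod _ _ _ fun i _ => hM (τ i) i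

theorem exists_eq_C_mul_of_dvd_of_isHomogeneous [IsDomain R] {f g : MvPolynomial σ R}
    (hfg : f ∣ g) (hg : g.IsHomogeneous f.totalDegree) (hg0 : g ≠ 0) :
    ∃ u : R, u ≠ 0 ∧ g = C u * f := by
  obtain ⟨q, rfl⟩ := hfg
  have hq0 : q.totalDegree = 0 := by
    have hdeg := hg.totalDegree hg0
    rw [totalDegree_mul_of_isDomain (left_ne_zero_of_mul hg0) (right_ne_zero_of_mul hg0)]
      at hdeg
    omega
  rw [totalDegree_eq_zero_iff_eq_C] at hq0
  refine ⟨q.coeff 0, fun h0 => right_ne_zero_of_mul hg0 ?_, by rw [mul_comm, ← hq0]⟩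
  rw [hq0, h0, C_0]

end Homogeneous

section Rename

variable {σ τ R : Type*} [CommRing R] {f : σ → τ}

theorem not_X_dvd_rename (hf : Function.Injective f) {i : τ} (hi : i ∉ Set.range f)
    {p : MvPolynomial σ R} (hp : p ≠ 0) : ¬ X i ∣ rename f p := by
  rintro ⟨c, hc⟩
  have hkill := congrArg (killCompl hf) hc
  rw [killCompl_rename_app, map_mul] at hkill
  simp [killCompl, hi, hp] at hkill

variable [IsDomain R]

theorem vars_subset_of_dvd {p q : MvPolynomial σ R} (h : p ∣ q) (hq : q ≠ 0) :
    p.vars ⊆ q.vars := by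
  classical
  obtain ⟨r, rfl⟩ := h
  intro i hi
  rw [vars_def, Multiset.mem_toFinset] at hi ⊢
  rw [degrees_mul_eq (left_ne_zero_of_mul hq) (right_ne_zero_of_mul hq)]
  exact Multiset.mem_add.mpr (Or.inl hi)

theorem squarefree_rename (hf : Function.Injective f) {p : MvPolynomial σ R}
    (hp : Squarefree p) : Squarefree (rename f p) := by
  rintro a ⟨b, hab⟩
  have hp0 : rename f p ≠ 0 := (map_ne_zero_iff _ (rename_injective f hf)).mpr hp.ne_zero
  have hvars : (a.vars : Set τ) ⊆ Set.range f := fun i hi => by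
    obtain ⟨j, -, rfl⟩ := mem_vars_rename f p (vars_subset_of_dvd ⟨a * b, by rw [hab]; ring⟩ hp0 hi)
    exact ⟨j, rfl⟩
  -- a factor of `rename f p` is itself renamed from `σ`, so `killCompl` transports it back
  obtain ⟨q, rfl⟩ := exists_rename_eq_of_vars_subset_range a f hf hvars
  have hq := congrArg (killCompl hf) hab
  rw [map_mul, map_mul, killCompl_rename_app, killCompl_rename_app] at hq
  exact (hp q ⟨_, hq⟩).map (rename f)

theorem squarefree_X_mul_rename [UniqueFactorizationMonoid R] (hf : Function.Injective f)
    {i : τ} (hi : i ∉ Set.range f) {p : MvPolynomial σ R} (hp : Squarefree p) :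
    Squarefree (X i * rename f p) :=
  squarefree_mul_iff.mpr ⟨X_prime.irreducible.isRelPrime_iff_not_dvd.mpr
    (not_X_dvd_rename hf hi hp.ne_zero), X_prime.squarefree, squarefree_rename hf hp⟩

end Rename

section Cone

variable {k : Type*} {n : ℕ}

theorem homog_eq_rename [CommRing k] {f : MvPolynomial (Fin n) k} {D : ℕ}
    (hf : f.IsHomogeneous D) : homog D f = rename Fin.succ f := by
  conv_rhs => rw [← support_sum_monomial_coeff f]
  rw [homog, map_sum, Finsupp.sum]
  refine Finset.sum_congr rfl fun m hm => ?_
  have hmD : (m.sum fun _ e => e) = D := by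
    change Finsupp.degree m = D
    rw [Finsupp.degree_eq_weight_one]
    exact hf (mem_support_iff.mp hm)
  rw [rename_monomial, hmD, Nat.sub_self, Finsupp.single_zero, add_zero]
  rfl

theorem pderiv_succ_X_zero_mul_rename [CommRing k] (j : Fin n) (f : MvPolynomial (Fin n) k) :
    pderiv j.succ (X 0 * rename Fin.succ f) = X 0 * rename Fin.succ (pderiv j f) := by
  rw [pderiv_mul, pderiv_X_of_ne (Fin.succ_ne_zero j).symm,
    pderiv_rename (Fin.succ_injective n), zero_mul, zero_add]

variable [CommRing k] {d : Fin n → ℕ} {P : Fin n → Fin n → MvPolynomial (Fin n) k}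

theorem saitoRows_succ_succ (hhom : ∀ i j, (P i j).IsHomogeneous (d i)) (i j : Fin n) :
    saitoRows d P i.succ j.succ = rename Fin.succ (P i j) := by
  simp [saitoRows, homog_eq_rename (hhom i j)]

theorem det_saitoRows (hhom : ∀ i j, (P i j).IsHomogeneous (d i)) :
    (Matrix.of (saitoRows d P)).det = X 0 * rename Fin.succ (Matrix.of P).det := by
  rw [Matrix.det_succ_column_zero, Fin.sum_univ_succ,
    Finset.sum_eq_zero fun i _ => by simp [saitoRows], add_zero]
  have hminor : (Matrix.of (saitoRows d P)).submatrix (Fin.succAbove 0) Fin.succ =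
      (Matrix.of P).map (rename Fin.succ) := by
    ext i j
    simp [saitoRows_succ_succ hhom]
  rw [hminor, AlgHom.map_det]
  simp [saitoRows]

theorem isLogDerivation_saitoRows {f : MvPolynomial (Fin n) k} {D : ℕ}
    (hf : f.IsHomogeneous D) (hhom : ∀ i j, (P i j).IsHomogeneous (d i))
    (hmem : ∀ i, (∑ j, P i j * pderiv j f) ∈ Ideal.span {f}) (i : Fin (n + 1)) :
    IsLogDerivation (X 0 * rename Fin.succ f) (saitoRows d P i) := by
  cases i using Fin.cases with
  | zero =>
    have hF : (X 0 * rename Fin.succ f).IsHomogeneous (1 + D) :=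
      (isHomogeneous_X k 0).mul (hf.rename_isHomogeneous)
    rw [IsLogDerivation, Ideal.mem_span_singleton]
    simp only [saitoRows, Fin.cons_zero]
    rw [hF.sum_X_mul_pderiv, nsmul_eq_mul]
    exact dvd_mul_left _ _
  | succ i =>
    obtain ⟨t, ht⟩ := Ideal.mem_span_singleton.mp (hmem i)
    have hsum : ∑ j, saitoRows d P i.succ j * pderiv j (X 0 * rename Fin.succ f) =
        X 0 * rename Fin.succ f * rename Fin.succ t := by
      rw [Fin.sum_univ_succ]
      simp only [saitoRows_succ_succ hhom, pderiv_succ_X_zero_mul_rename]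
      simp only [saitoRows, Fin.cons_succ, Fin.cons_zero, zero_mul, zero_add]
      rw [mul_assoc, ← map_mul, ← ht, map_sum, Finset.mul_sum]
      refine Finset.sum_congr rfl fun j _ => ?_
      rw [map_mul]
      ring
    rw [IsLogDerivation, hsum]
    exact Ideal.mul_mem_right _ _ (Ideal.mem_span_singleton_self _)

end Cone

end MvPolynomial

/-- Let `f ∈ k[x₁,…,xₙ]` be reduced (squarefree) with `Der(f)` free with
a basis of homogeneous derivations `δᵢ = Σⱼ P i j ∂ⱼ` (each `P i j` homogeneous of degree
`d i`) satisfying `Σ d i = deg f`. Then the divisor in `ℙⁿ` defined by `x₀·f^h` is free: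
the Euler derivation together with `δ₁^h,…,δₙ^h` lie in `Der(x₀ f^h)` and form a basis of
it, and the determinant of the corresponding `(n+1)×(n+1)` Saito matrix equals `x₀·f^h`
up to a unit. -/
theorem stmt_17 {k : Type*} [Field k] [CharZero k] {n : ℕ}
    (f : MvPolynomial (Fin n) k) (hred : Squarefree f)
    (d : Fin n → ℕ) (P : Fin n → Fin n → MvPolynomial (Fin n) k)
    (hhom : ∀ i j, (P i j).IsHomogeneous (d i))
    (hmem : ∀ i, (∑ j, P i j * pderiv j f) ∈ Ideal.span {f})
    (hbasis : ∀ g : Fin n → MvPolynomial (Fin n) k,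
      (∑ j, g j * pderiv j f) ∈ Ideal.span {f} →
        ∃! c : Fin n → MvPolynomial (Fin n) k, ∀ j, g j = ∑ i, c i * P i j)
    (hdeg : ∑ i, d i = f.totalDegree) :
    (∀ i, (∑ j, saitoRows d P i j * pderiv j (X 0 * homog f.totalDegree f))
        ∈ Ideal.span {X 0 * homog f.totalDegree f}) ∧
    (∀ g : Fin (n + 1) → MvPolynomial (Fin (n + 1)) k,
      (∑ j, g j * pderiv j (X 0 * homog f.totalDegree f))
          ∈ Ideal.span {X 0 * homog f.totalDegree f} →
        ∃! c : Fin (n + 1) → MvPolynomial (Fin (n + 1)) k,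
          ∀ j, g j = ∑ i, c i * saitoRows d P i j) ∧
    (∃ u : k, u ≠ 0 ∧
      (Matrix.of (saitoRows d P)).det = C u * (X 0 * homog f.totalDegree f)) := by
  have hdetP : (Matrix.of P).det ≠ 0 := by
    rw [Ne, ← Matrix.exists_vecMul_eq_zero_iff]
    rintro ⟨v, hv, hvP⟩
    obtain ⟨c, -, huniq⟩ := hbasis 0 (by simp)
    have hv' : v = c := huniq v fun j => (congrFun hvP j).symm
    exact hv (hv'.trans (huniq 0 (by simp)).symm)
  have hdetHom : (Matrix.of P).det.IsHomogeneous f.totalDegree :=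
    hdeg ▸ isHomogeneous_det hhom
  obtain ⟨u, hu, hdet⟩ := exists_eq_C_mul_of_dvd_of_isHomogeneous
    (hred.dvd_det_of_isLogDerivation (M := Matrix.of P) hmem) hdetHom hdetP
  have hfHom : f.IsHomogeneous f.totalDegree := by
    have h := hdetHom.C_mul u⁻¹
    rwa [hdet, ← mul_assoc, ← C_mul, inv_mul_cancel₀ hu, C_1, one_mul] at h
  have hrows := isLogDerivation_saitoRows hfHom hhom hmem
  have hdetA : (Matrix.of (saitoRows d P)).det = C u * (X 0 * rename Fin.succ f) := by
    rw [det_saitoRows hhom, hdet, map_mul, rename_C, mul_left_comm]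
  have hF : Squarefree (X 0 * rename Fin.succ f) :=
    squarefree_X_mul_rename (Fin.succ_injective n) (by simp) hred
  rw [homog_eq_rename hfHom]
  exact ⟨hrows, fun g hg => saito_criterion hF hrows hu hdetA hg, u, hu, hdetA⟩
end

section
/- For positive integers n₁ ≤ … ≤ n_ℓ, let ωᵢ = ∏_{j≠i} nⱼ and, for m = 1,…,ℓ, let ζ_m = Σ_{i=1}^{m} ωᵢ xᵢ ∏_{m<j≤ℓ}(xᵢ^{nᵢ} − xⱼ^{nⱼ}) ∂/∂xᵢ; then the determinant of the ℓ×ℓ lower-triangular-type matrix M whose rows are the coefficient vectors of ζ_1,…,ζ_ℓ equals u·x₁⋯x_ℓ·∏_{1≤i<j≤ℓ}(xᵢ^{nᵢ} − xⱼ^{nⱼ}) for the unit u = ∏ᵢωᵢ, i.e., the determinant is the defining polynomial up to a unit. -/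
open MvPolynomial

/-- For positive integers `n₁ ≤ … ≤ n_ℓ` and `ωᵢ = ∏_{j≠i} nⱼ`, the
`ℓ×ℓ` matrix whose row `m` (for `m = 1,…,ℓ`, here `m = a+1` for `a : Fin ℓ`) corresponds
to the derivation `ζₘ = Σ_{i≤m} ωᵢ xᵢ ∏_{m<j}(xᵢ^{nᵢ} − xⱼ^{nⱼ}) ∂ᵢ`, i.e. has entry
`ωᵢ xᵢ ∏_{j>a}(xᵢ^{nᵢ} − xⱼ^{nⱼ})` in column `i` for `i ≤ a` and `0` otherwise, has
determinant `u · x₁⋯x_ℓ · ∏_{i<j}(xᵢ^{nᵢ} − xⱼ^{nⱼ})` with unit `u = ∏ᵢ ωᵢ`. -/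
theorem stmt_18 {k : Type*} [Field k] [CharZero k] {ℓ : ℕ}
    (n : Fin ℓ → ℕ) (hn : ∀ i, 0 < n i) (hmono : Monotone n) :
    (Matrix.of fun a i : Fin ℓ =>
        if i ≤ a then
          (C ((∏ j ∈ Finset.univ.erase i, n j : ℕ) : k) : MvPolynomial (Fin ℓ) k) *
            X i * ∏ j ∈ Finset.Ioi a, (X i ^ n i - X j ^ n j)
        else 0).det
      = C ((∏ i : Fin ℓ, ∏ j ∈ Finset.univ.erase i, n j : ℕ) : k) *
          ((∏ i, X i) * ∏ i, ∏ j ∈ Finset.Ioi i, (X i ^ n i - X j ^ n j)) := by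
  rw [Matrix.det_of_lowerTriangular _ (fun a i h => by
    have : ¬ i ≤ a := fun hle => h.not_ge hle
    simp only [Matrix.of_apply, if_neg this])]
  simp only [Matrix.of_apply, if_pos le_rfl]
  rw [Finset.prod_mul_distrib, Finset.prod_mul_distrib, ← map_prod, Nat.cast_prod]
  ring
end

section
/- Let ζ_m = Σ_{i=1}^{m} ωᵢ xᵢ ∏_{m<j≤ℓ}(xᵢ^{nᵢ} − xⱼ^{nⱼ}) ∂/∂xᵢ for 1 ≤ m ≤ ℓ, where n₁,…,n_ℓ are positive integers and ω = (ω₁,…,ω_ℓ) are positive weights with nᵢωᵢ = nⱼωⱼ for all i,j. Then each ζ_m satisfies ζ_m(F) ∈ (F), where F = x₁⋯x_ℓ·∏_{1≤i<j≤ℓ}(xᵢ^{nᵢ} − xⱼ^{nⱼ}). -/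
open MvPolynomial


private lemma delta_mul {k : Type*} [CommRing k] {ℓ : ℕ} (a : Fin ℓ → MvPolynomial (Fin ℓ) k)
    (S : Finset (Fin ℓ)) (p q : MvPolynomial (Fin ℓ) k) :
    (∑ i ∈ S, a i * pderiv i (p * q)) =
      p * (∑ i ∈ S, a i * pderiv i q) + q * (∑ i ∈ S, a i * pderiv i p) := by
  simp only [pderiv_mul]
  rw [Finset.mul_sum, Finset.mul_sum, ← Finset.sum_add_distrib]
  exact Finset.sum_congr rfl fun i _ => by ring

private lemma delta_dvd_mul {k : Type*} [CommRing k] {ℓ : ℕ} {a : Fin ℓ → MvPolynomial (Fin ℓ) k}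
    {S : Finset (Fin ℓ)} {p q : MvPolynomial (Fin ℓ) k}
    (hp : p ∣ ∑ i ∈ S, a i * pderiv i p) (hq : q ∣ ∑ i ∈ S, a i * pderiv i q) :
    p * q ∣ ∑ i ∈ S, a i * pderiv i (p * q) := by
  rw [delta_mul]
  refine dvd_add (mul_dvd_mul (dvd_refl p) hq) ?_
  rw [mul_comm p q]
  exact mul_dvd_mul (dvd_refl q) hp

private lemma delta_dvd_prod {k : Type*} [CommRing k] {ℓ : ℕ} {a : Fin ℓ → MvPolynomial (Fin ℓ) k}
    {S : Finset (Fin ℓ)} {ι : Type*} {g : ι → MvPolynomial (Fin ℓ) k} {T : Finset ι}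
    (h : ∀ t ∈ T, g t ∣ ∑ i ∈ S, a i * pderiv i (g t)) :
    (∏ t ∈ T, g t) ∣ ∑ i ∈ S, a i * pderiv i (∏ t ∈ T, g t) := by
  classical
  induction T using Finset.induction_on with
  | empty => simp [pderiv_one]
  | @insert s T hs ih =>
    rw [Finset.prod_insert hs]
    exact delta_dvd_mul (h s (Finset.mem_insert_self s T))
      (ih fun t ht => h t (Finset.mem_insert_of_mem ht))

private lemma sub_dvd_prod_sub {A : Type*} [CommRing A] {ι : Type*} (u v : A) (c : ι → A)
    (T : Finset ι) :
    (u - v) ∣ (∏ t ∈ T, (u - c t)) - ∏ t ∈ T, (v - c t) := by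
  classical
  induction T using Finset.induction_on with
  | empty => simp
  | @insert s T hs ih =>
    obtain ⟨q, hq⟩ := ih
    refine ⟨(∏ t ∈ T, (v - c t)) + (u - c s) * q, ?_⟩
    rw [Finset.prod_insert hs, Finset.prod_insert hs]
    linear_combination (u - c s) * hq

/-- With positive integers `nᵢ` and positive weights `ωᵢ` satisfying
`nᵢωᵢ = nⱼωⱼ`, each derivation `ζₘ = Σ_{i≤m} ωᵢ xᵢ ∏_{m<j}(xᵢ^{nᵢ} − xⱼ^{nⱼ}) ∂ᵢ`
(for `1 ≤ m ≤ ℓ`, encoded by `m : Fin ℓ` with the sum over `i ≤ m` and the product over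
`j > m`) satisfies `ζₘ(F) ∈ (F)`, where
`F = x₁⋯x_ℓ · ∏_{i<j}(xᵢ^{nᵢ} − xⱼ^{nⱼ})`. -/
theorem stmt_19 {k : Type*} [Field k] [CharZero k] {ℓ : ℕ}
    (n w : Fin ℓ → ℕ) (hn : ∀ i, 0 < n i) (hw : ∀ i, 0 < w i)
    (hnw : ∀ i j, n i * w i = n j * w j) (m : Fin ℓ) :
    (∑ i ∈ Finset.Iic m,
        (w i : MvPolynomial (Fin ℓ) k) * X i *
            (∏ j ∈ Finset.Ioi m, (X i ^ n i - X j ^ n j)) *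
          pderiv i ((∏ i, X i) *
            ∏ i, ∏ j ∈ Finset.Ioi i, (X i ^ n i - X j ^ n j)))
      ∈ Ideal.span
          {(∏ i, X i) * ∏ i, ∏ j ∈ Finset.Ioi i, (X i ^ n i - X j ^ n j)} := by
  classical
  rw [Ideal.mem_span_singleton]
  have hpow : ∀ (t : Fin ℓ) (e : ℕ),
      (∑ i ∈ Finset.Iic m, (w i : MvPolynomial (Fin ℓ) k) * X i *
          (∏ j ∈ Finset.Ioi m, (X i ^ n i - X j ^ n j)) *
          pderiv i ((X t : MvPolynomial (Fin ℓ) k) ^ e)) =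
        if t ∈ Finset.Iic m then
          (w t : MvPolynomial (Fin ℓ) k) * X t *
            (∏ j ∈ Finset.Ioi m, (X t ^ n t - X j ^ n j)) *
            ((e : MvPolynomial (Fin ℓ) k) * X t ^ (e - 1))
        else 0 := by
    intro t e
    split_ifs with ht
    · rw [Finset.sum_eq_single_of_mem t ht]
      · rw [pderiv_pow, pderiv_X_self, mul_one]
      · intro b _ hbt
        simp [pderiv_pow, pderiv_X_of_ne (Ne.symm hbt)]
    · apply Finset.sum_eq_zero
      intro b hb
      have hbt : t ≠ b := fun h => ht (h ▸ hb)
      simp [pderiv_pow, pderiv_X_of_ne hbt]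
  refine delta_dvd_mul ?_ ?_
  · -- each X t divides δ (X t)
    refine delta_dvd_prod fun t _ => ?_
    by_cases ht : t ∈ Finset.Iic m
    · rw [Finset.sum_eq_single_of_mem t ht]
      · rw [pderiv_X_self, mul_one]
        exact ⟨(w t : MvPolynomial (Fin ℓ) k) *
          ∏ j ∈ Finset.Ioi m, (X t ^ n t - X j ^ n j), by ring⟩
      · intro b _ hbt
        simp [pderiv_X_of_ne (Ne.symm hbt)]
    · rw [Finset.sum_eq_zero]
      · exact dvd_zero _
      · intro b hb
        have hbt : t ≠ b := fun h => ht (h ▸ hb)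
        simp [pderiv_X_of_ne hbt]
  · refine delta_dvd_prod fun i _ => ?_
    refine delta_dvd_prod fun j hj => ?_
    have hij : i < j := Finset.mem_Ioi.mp hj
    have hsub : (∑ t ∈ Finset.Iic m, (w t : MvPolynomial (Fin ℓ) k) * X t *
          (∏ j' ∈ Finset.Ioi m, (X t ^ n t - X j' ^ n j')) *
          pderiv t ((X i : MvPolynomial (Fin ℓ) k) ^ n i - X j ^ n j)) =
        (∑ t ∈ Finset.Iic m, (w t : MvPolynomial (Fin ℓ) k) * X t *
          (∏ j' ∈ Finset.Ioi m, (X t ^ n t - X j' ^ n j')) *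
          pderiv t ((X i : MvPolynomial (Fin ℓ) k) ^ n i)) -
        ∑ t ∈ Finset.Iic m, (w t : MvPolynomial (Fin ℓ) k) * X t *
          (∏ j' ∈ Finset.Ioi m, (X t ^ n t - X j' ^ n j')) *
          pderiv t ((X j : MvPolynomial (Fin ℓ) k) ^ n j) := by
      rw [← Finset.sum_sub_distrib]
      exact Finset.sum_congr rfl fun t _ => by rw [map_sub, mul_sub]
    rw [hsub, hpow i (n i), hpow j (n j)]
    by_cases hi : i ∈ Finset.Iic m
    · by_cases hjm : j ∈ Finset.Iic m
      · rw [if_pos hi, if_pos hjm]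
        obtain ⟨q, hq⟩ := sub_dvd_prod_sub ((X i : MvPolynomial (Fin ℓ) k) ^ n i)
          ((X j : MvPolynomial (Fin ℓ) k) ^ n j)
          (fun t : Fin ℓ => (X t : MvPolynomial (Fin ℓ) k) ^ n t) (Finset.Ioi m)
        have e1 : (X i : MvPolynomial (Fin ℓ) k) * X i ^ (n i - 1) = X i ^ n i := by
          conv_rhs => rw [show n i = (n i - 1) + 1 by have := hn i; omega]
          rw [pow_succ']
        have e2 : (X j : MvPolynomial (Fin ℓ) k) * X j ^ (n j - 1) = X j ^ n j := by
          conv_rhs => rw [show n j = (n j - 1) + 1 by have := hn j; omega]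
          rw [pow_succ']
        have hc : ((n j : MvPolynomial (Fin ℓ) k)) * (w j : MvPolynomial (Fin ℓ) k) =
            (n i : MvPolynomial (Fin ℓ) k) * (w i : MvPolynomial (Fin ℓ) k) := by
          exact_mod_cast congrArg (Nat.cast : ℕ → MvPolynomial (Fin ℓ) k) (hnw j i)
        refine ⟨(n i : MvPolynomial (Fin ℓ) k) * (w i : MvPolynomial (Fin ℓ) k) *
          ((X i ^ n i) * q + ∏ t ∈ Finset.Ioi m, (X j ^ n j - X t ^ n t)), ?_⟩
        linear_combination
          ((n i : MvPolynomial (Fin ℓ) k) * (w i : MvPolynomial (Fin ℓ) k) *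
            (∏ j' ∈ Finset.Ioi m, (X i ^ n i - X j' ^ n j'))) * e1 -
          ((n j : MvPolynomial (Fin ℓ) k) * (w j : MvPolynomial (Fin ℓ) k) *
            (∏ j' ∈ Finset.Ioi m, (X j ^ n j - X j' ^ n j'))) * e2 +
          ((n i : MvPolynomial (Fin ℓ) k) * (w i : MvPolynomial (Fin ℓ) k) *
            (X i ^ n i)) * hq -
          ((X j ^ n j) * ∏ t ∈ Finset.Ioi m, (X j ^ n j - X t ^ n t)) * hc
      · rw [if_pos hi, if_neg hjm, sub_zero]
        have hjIoi : j ∈ Finset.Ioi m :=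
          Finset.mem_Ioi.mpr (lt_of_not_ge fun h => hjm (Finset.mem_Iic.mpr h))
        exact ((Finset.dvd_prod_of_mem (fun t => (X i : MvPolynomial (Fin ℓ) k) ^ n i - X t ^ n t)
          hjIoi).mul_left ((w i : MvPolynomial (Fin ℓ) k) * X i)).mul_right _
    · have hjm : j ∉ Finset.Iic m := fun h =>
        hi (Finset.mem_Iic.mpr (le_trans hij.le (Finset.mem_Iic.mp h)))
      rw [if_neg hi, if_neg hjm, sub_zero]
      exact dvd_zero _
end
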